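/- arXiv:1103.2209 — 4 statements merged into one kernel-verified Lean document; each statement's English description precedes it below -/
import Mathlib

section
/- Let y ∈ ℝⁿ with y[i] ≥ 0 for all i, H : ℝⁿ → ℝⁿ and Φ : ℝᴸ → ℝⁿ linear, γ > 0, and Ψ : ℝᴸ → ℝ nonnegative and coercive (Ψ(α) → +∞ as ‖α‖ → +∞). Then J(α) = f₁(HΦα) + γΨ(α) + ι_C(Φα) is coercive: for every M ∈ ℝ there exists R > 0 such that ‖α‖ > R implies J(α) > M. -/
/-- Scalar Poisson negative log-likelihood `f_pois(y,·) : ℝ → (-∞,+∞]`. -/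
noncomputable def fpois (y t : ℝ) : EReal :=
  if 0 < y then (if 0 < t then ((-y * Real.log t + t : ℝ) : EReal) else ⊤)
  else (if 0 ≤ t then ((t : ℝ) : EReal) else ⊤)

/-- Poisson data-fidelity term `f₁(η) = Σᵢ f_pois(y[i], η[i])`. -/
noncomputable def f1 {n : ℕ} (y : Fin n → ℝ) (η : EuclideanSpace ℝ (Fin n)) : EReal :=
  ∑ i, fpois (y i) (η i)

/-- Indicator function of a set, `0` on the set, `+∞` off it. -/
noncomputable def indC {E : Type*} (C : Set E) (w : E) : EReal :=
  open Classical in if w ∈ C then 0 else ⊤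

/-- The objective `J(α) = f₁(HΦα) + γΨ(α) + ι_C(Φα)`, `C` the nonnegative orthant. -/
noncomputable def J {n L : ℕ} (y : Fin n → ℝ)
    (H : EuclideanSpace ℝ (Fin n) →ₗ[ℝ] EuclideanSpace ℝ (Fin n))
    (Φ : EuclideanSpace ℝ (Fin L) →ₗ[ℝ] EuclideanSpace ℝ (Fin n)) (γ : ℝ)
    (Ψ : EuclideanSpace ℝ (Fin L) → ℝ) (α : EuclideanSpace ℝ (Fin L)) : EReal :=
  f1 y (H (Φ α)) + ((γ * Ψ α : ℝ) : EReal)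
    + indC {x : EuclideanSpace ℝ (Fin n) | ∀ i, 0 ≤ x i} (Φ α)

/-!
Each `f_pois(y, ·)` is bounded below: for `y > 0` it is minimised at `t = y` (by `log x ≤ x - 1`
applied to `x = t / y`), and for `y ≤ 0` it is `t ≥ 0` on its domain. Hence `f₁` is bounded below
by a constant, `ι_C ≥ 0`, and `J ≥ const + γ Ψ` inherits the coercivity of `Ψ`.
-/

open Real

lemma fpois_self_le {y : ℝ} (hy : 0 < y) (t : ℝ) : fpois y y ≤ fpois y t := by
  rcases le_or_gt t 0 with ht | ht
  · simp [fpois, hy, not_lt.2 ht]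
  simp only [fpois, if_pos hy, if_pos ht, EReal.coe_le_coe_iff]
  have hlog : log (t / y) ≤ t / y - 1 := log_le_sub_one_of_pos (by positivity)
  rw [log_div ht.ne' hy.ne'] at hlog
  have hscaled : y * (log t - log y) ≤ t - y := by
    calc y * (log t - log y) ≤ y * (t / y - 1) := mul_le_mul_of_nonneg_left hlog hy.le
      _ = t - y := by field_simp
  linarith

lemma fpois_nonneg_of_nonpos {y : ℝ} (hy : y ≤ 0) (t : ℝ) : 0 ≤ fpois y t := by
  rcases le_or_gt 0 t with ht | ht
  · simp [fpois, not_lt.2 hy, ht]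
  · simp [fpois, not_lt.2 hy, not_le.2 ht]

lemma exists_coe_le_fpois (y : ℝ) : ∃ c : ℝ, ∀ t, (c : EReal) ≤ fpois y t := by
  rcases lt_or_ge 0 y with hy | hy
  · exact ⟨-y * log y + y, fun t => by simpa [fpois, hy] using fpois_self_le hy t⟩
  · exact ⟨0, fpois_nonneg_of_nonpos hy⟩

lemma exists_coe_le_f1 {n : ℕ} (y : Fin n → ℝ) :
    ∃ c : ℝ, ∀ η : EuclideanSpace ℝ (Fin n), (c : EReal) ≤ f1 y η := by
  choose c hc using fun i => exists_coe_le_fpois (y i)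
  refine ⟨∑ i, c i, fun η => ?_⟩
  calc ((∑ i, c i : ℝ) : EReal) = ∑ i, (c i : EReal) :=
        map_sum (⟨⟨Real.toEReal, EReal.coe_zero⟩, EReal.coe_add⟩ : ℝ →+ EReal) c _
    _ ≤ f1 y η := Finset.sum_le_sum fun i _ => hc i (η i)

lemma indC_nonneg {E : Type*} (C : Set E) (w : E) : 0 ≤ indC C w := by
  unfold indC
  split <;> simp

lemma exists_lt_add_mul_add_of_coercive {E : Type*} [Norm E] {F G : E → EReal} {Ψ : E → ℝ}
    {c γ : ℝ} (hF : ∀ α, (c : EReal) ≤ F α) (hG : ∀ α, 0 ≤ G α) (hγ : 0 < γ)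
    (hΨ : ∀ M : ℝ, ∃ R : ℝ, ∀ α, R < ‖α‖ → M < Ψ α) (M : ℝ) :
    ∃ R : ℝ, 0 < R ∧ ∀ α, R < ‖α‖ → (M : EReal) < F α + ((γ * Ψ α : ℝ) : EReal) + G α := by
  obtain ⟨R₀, hR₀⟩ := hΨ ((M - c) / γ)
  refine ⟨max R₀ 1, by positivity, fun α hα => ?_⟩
  have hM : M < c + γ * Ψ α := by
    have := (div_lt_iff₀' hγ).1 (hR₀ α ((le_max_left _ _).trans_lt hα))
    linarith
  calc (M : EReal) < ((c + γ * Ψ α : ℝ) : EReal) := EReal.coe_lt_coe_iff.2 hM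
    _ = (c : EReal) + ((γ * Ψ α : ℝ) : EReal) + 0 := by rw [add_zero, EReal.coe_add]
    _ ≤ F α + ((γ * Ψ α : ℝ) : EReal) + G α := add_le_add (add_le_add_left (hF α) _) (hG α)

theorem J_coercive_general (n L : ℕ) (y : Fin n → ℝ)
    (H : EuclideanSpace ℝ (Fin n) →ₗ[ℝ] EuclideanSpace ℝ (Fin n))
    (Φ : EuclideanSpace ℝ (Fin L) →ₗ[ℝ] EuclideanSpace ℝ (Fin n))
    (γ : ℝ) (hγ : 0 < γ) (Ψ : EuclideanSpace ℝ (Fin L) → ℝ)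
    (hΨcoercive : ∀ M : ℝ, ∃ R : ℝ, ∀ α : EuclideanSpace ℝ (Fin L), R < ‖α‖ → M < Ψ α) :
    ∀ M : ℝ, ∃ R : ℝ, 0 < R ∧
      ∀ α : EuclideanSpace ℝ (Fin L), R < ‖α‖ → (M : EReal) < J y H Φ γ Ψ α := by
  obtain ⟨c, hc⟩ := exists_coe_le_f1 y
  exact exists_lt_add_mul_add_of_coercive (fun α => hc (H (Φ α))) (fun α => indC_nonneg _ _)
    hγ hΨcoercive

/-- If `Ψ` is nonnegative and coercive, then `J` is coercive: for every `M` there is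
`R > 0` such that `‖α‖ > R` implies `J(α) > M`. -/
theorem J_coercive (n L : ℕ) (y : Fin n → ℝ) (hy : ∀ i, 0 ≤ y i)
    (H : EuclideanSpace ℝ (Fin n) →ₗ[ℝ] EuclideanSpace ℝ (Fin n))
    (Φ : EuclideanSpace ℝ (Fin L) →ₗ[ℝ] EuclideanSpace ℝ (Fin n))
    (γ : ℝ) (hγ : 0 < γ) (Ψ : EuclideanSpace ℝ (Fin L) → ℝ)
    (hΨnn : ∀ α, 0 ≤ Ψ α)
    (hΨcoercive : ∀ M : ℝ, ∃ R : ℝ, ∀ α : EuclideanSpace ℝ (Fin L), R < ‖α‖ → M < Ψ α) :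
    ∀ M : ℝ, ∃ R : ℝ, 0 < R ∧
      ∀ α : EuclideanSpace ℝ (Fin L), R < ‖α‖ → (M : EReal) < J y H Φ γ Ψ α :=
  J_coercive_general n L y H Φ γ hγ Ψ hΨcoercive
end

section
/- Let y ≥ 0, β > 0 and x ∈ ℝ. The unique minimizer over t ∈ ℝ of the function t ↦ β·f_pois(y,t) + (t - x)²/2 (valued in (-∞,+∞]) is t* = (x - β + √((x - β)² + 4βy))/2. -/
/-! The claimed point `T` is the nonnegative root of `T² - (x - β) T - β y`, i.e.
`T (T + β - x) = β y` with `T + β - x ≥ 0`. Through `log (t / T) ≤ t / T - 1` this says that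
`x - T` is a subgradient of `β f_pois(y,·)` at `T`, which is the optimality condition of the prox.
Adding `(t - x)²/2 = (T - x)²/2 + (T - x)(t - T) + (t - T)²/2` yields the quadratic growth
`β f(T) + (T - x)²/2 + (t - T)²/2 ≤ β f(t) + (t - x)²/2`, giving minimality and uniqueness at once. -/

open Real

section QuadraticRoot

variable {b d : ℝ}

theorem half_add_sqrt_nonneg (hd : b ^ 2 ≤ d) : 0 ≤ (b + √d) / 2 := by
  linarith [neg_abs_le b, abs_le_sqrt hd]

theorem le_half_add_sqrt (hd : b ^ 2 ≤ d) : b ≤ (b + √d) / 2 := by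
  linarith [le_abs_self b, abs_le_sqrt hd]

theorem half_add_sqrt_mul_sub (hd : b ^ 2 ≤ d) :
    (b + √d) / 2 * ((b + √d) / 2 - b) = (d - b ^ 2) / 4 := by
  linear_combination sq_sqrt ((sq_nonneg b).trans hd) / 4

end QuadraticRoot

theorem mul_log_sub_log_le {s t : ℝ} (hs : 0 < s) (ht : 0 < t) :
    s * (log t - log s) ≤ t - s := by
  have h := log_le_sub_one_of_pos (div_pos ht hs)
  rw [log_div ht.ne' hs.ne'] at h
  calc s * (log t - log s) ≤ s * (t / s - 1) := mul_le_mul_of_nonneg_left h hs.le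
    _ = t - s := by field_simp

theorem fpois_eq_ite {y : ℝ} (hy : 0 ≤ y) (t : ℝ) :
    fpois y t = if 0 ≤ t ∧ (0 < y → 0 < t) then ((-y * log t + t : ℝ) : EReal) else ⊤ := by
  rcases hy.lt_or_eq with hy | rfl
  · by_cases ht : 0 < t
    · simp [fpois, hy, ht, ht.le]
    · simp [fpois, hy, ht]
  · simp [fpois]

section ProxRoot

variable {y β x T : ℝ} (hβ : 0 < β) (hT : 0 ≤ T) (hroot : T * (T - (x - β)) = β * y)
include hβ hT hroot

theorem pos_of_prox_root (hy : 0 < y) : 0 < T :=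
  hT.lt_of_ne fun h => by rw [← h, zero_mul] at hroot; linarith [mul_pos hβ hy]

variable (hc : 0 ≤ T - (x - β))
include hc

theorem subgradient_ineq_of_prox_root (hy : 0 ≤ y) {t : ℝ} (ht : 0 ≤ t) (hyt : 0 < y → 0 < t) :
    β * (-y * log T + T) + (x - T) * (t - T) ≤ β * (-y * log t + t) := by
  rcases hy.lt_or_eq with hy | rfl
  · have key := mul_le_mul_of_nonneg_left
      (mul_log_sub_log_le (pos_of_prox_root hβ hT hroot hy) (hyt hy)) hc
    linear_combination key - (log t - log T) * hroot
  · nlinarith [mul_nonneg ht hc]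

theorem prox_objective_growth (hy : 0 ≤ y) (t : ℝ) :
    ((β * (-y * log T + T) + (T - x) ^ 2 / 2 + (t - T) ^ 2 / 2 : ℝ) : EReal)
      ≤ (β : EReal) * fpois y t + (((t - x) ^ 2 / 2 : ℝ) : EReal) := by
  rw [fpois_eq_ite hy]
  split_ifs with ht
  · rw [← EReal.coe_mul, ← EReal.coe_add, EReal.coe_le_coe_iff]
    linear_combination subgradient_ineq_of_prox_root hβ hT hroot hc hy ht.1 ht.2
  · rw [EReal.mul_top_of_pos (by exact_mod_cast hβ), EReal.top_add_coe]
    exact le_top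

end ProxRoot

/-- Proximity operator of `β·f_pois(y,·)`: for `y ≥ 0`, `β > 0`, `x ∈ ℝ`, the unique
minimizer of `t ↦ β·f_pois(y,t) + (t-x)²/2` is `(x - β + √((x-β)² + 4βy))/2`. -/
theorem prox_fpois (y β x : ℝ) (hy : 0 ≤ y) (hβ : 0 < β) :
    ∀ tstar : ℝ, tstar = (x - β + Real.sqrt ((x - β) ^ 2 + 4 * β * y)) / 2 →
      (∀ t : ℝ,
        (β : EReal) * fpois y tstar + (((tstar - x) ^ 2 / 2 : ℝ) : EReal)
          ≤ (β : EReal) * fpois y t + (((t - x) ^ 2 / 2 : ℝ) : EReal)) ∧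
      (∀ t : ℝ,
        (∀ s : ℝ,
          (β : EReal) * fpois y t + (((t - x) ^ 2 / 2 : ℝ) : EReal)
            ≤ (β : EReal) * fpois y s + (((s - x) ^ 2 / 2 : ℝ) : EReal)) →
        t = tstar) := by
  intro T hT
  have hd : (x - β) ^ 2 ≤ (x - β) ^ 2 + 4 * β * y := by nlinarith [mul_nonneg hβ.le hy]
  have hT0 : 0 ≤ T := hT ▸ half_add_sqrt_nonneg hd
  have hc : 0 ≤ T - (x - β) := sub_nonneg.2 (hT ▸ le_half_add_sqrt hd)
  have hroot : T * (T - (x - β)) = β * y := by rw [hT, half_add_sqrt_mul_sub hd]; ring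
  have hgrowth := prox_objective_growth hβ hT0 hroot hc hy
  have hobjT : (β : EReal) * fpois y T + (((T - x) ^ 2 / 2 : ℝ) : EReal)
      = ((β * (-y * log T + T) + (T - x) ^ 2 / 2 : ℝ) : EReal) := by
    rw [fpois_eq_ite hy, if_pos ⟨hT0, pos_of_prox_root hβ hT0 hroot⟩]
    norm_cast
  refine ⟨fun t => ?_, fun t hmin => ?_⟩
  · rw [hobjT]
    exact (EReal.coe_le_coe_iff.2 (le_add_of_nonneg_right (by positivity))).trans (hgrowth t)
  · have h := (hgrowth t).trans (hmin T)
    rw [hobjT, EReal.coe_le_coe_iff] at h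
    have hsq : (t - T) ^ 2 = 0 := by linarith [sq_nonneg (t - T)]
    exact sub_eq_zero.1 (pow_eq_zero_iff two_ne_zero |>.1 hsq)
end

section
/- Let y ∈ ℝⁿ with y[i] ≥ 0 for all i, β > 0, and x ∈ ℝⁿ. The unique minimizer over η ∈ ℝⁿ of η ↦ β·f₁(η) + ‖x - η‖²/2 (valued in (-∞,+∞]) is given coordinatewise by η*[i] = (x[i] - β + √((x[i] - β)² + 4β·y[i]))/2 for each i. -/
/-!
The objective is separable, and each scalar objective `φ(t) = β·f_pois(y, t) + (x - t)²/2` is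
`1`-strongly convex. Its minimizer `p` is the nonnegative root of the stationarity equation
`p (p + β - x) = β y`, which is exactly the formula in the statement; then `(x - p)/β` is a
subgradient of `f_pois(y, ·)` at `p`, so `φ(t) ≥ φ(p) + (t - p)²/2`. Summing over the coordinates
gives `F(η) ≥ F(η*) + ‖η - η*‖²/2` for the full objective `F`, with `F(η*)` finite, which yields
both minimality and uniqueness.
-/

noncomputable def proxFpois (y β x : ℝ) : ℝ := (x - β + √((x - β) ^ 2 + 4 * β * y)) / 2

section proxFpois

variable {y β x : ℝ}

lemma sub_le_proxFpois (h : 0 ≤ β * y) : x - β ≤ proxFpois y β x := by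
  have : |x - β| ≤ √((x - β) ^ 2 + 4 * β * y) :=
    Real.abs_le_sqrt (by nlinarith)
  unfold proxFpois
  linarith [le_abs_self (x - β)]

lemma proxFpois_nonneg (h : 0 ≤ β * y) : 0 ≤ proxFpois y β x := by
  have : |x - β| ≤ √((x - β) ^ 2 + 4 * β * y) :=
    Real.abs_le_sqrt (by nlinarith)
  unfold proxFpois
  linarith [neg_abs_le (x - β)]

lemma proxFpois_mul_eq (h : 0 ≤ β * y) :
    proxFpois y β x * (proxFpois y β x + β - x) = β * y := by
  have := Real.sq_sqrt (show 0 ≤ (x - β) ^ 2 + 4 * β * y by nlinarith)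
  unfold proxFpois
  linear_combination this / 4

lemma proxFpois_pos (h : 0 < β * y) : 0 < proxFpois y β x := by
  refine (proxFpois_nonneg h.le).lt_of_ne fun h0 => ?_
  have := proxFpois_mul_eq (x := x) h.le
  rw [← h0, zero_mul] at this
  exact h.ne this

end proxFpois

lemma Real.mul_log_sub_log_le_sub {p t : ℝ} (hp : 0 < p) (ht : 0 < t) :
    p * (Real.log t - Real.log p) ≤ t - p := by
  have := Real.log_le_sub_one_of_pos (div_pos ht hp)
  rw [Real.log_div ht.ne' hp.ne'] at this
  calc p * (Real.log t - Real.log p) ≤ p * (t / p - 1) := by gcongr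
    _ = t - p := by field_simp

section fpois

variable {y β x : ℝ}

lemma exists_fpois_proxFpois_eq_coe (hy : 0 ≤ y) (hβ : 0 < β) :
    ∃ r : ℝ, fpois y (proxFpois y β x) = r := by
  unfold fpois
  split_ifs with hy0 hp hp
  · exact ⟨_, rfl⟩
  · exact absurd (proxFpois_pos (mul_pos hβ hy0)) hp
  · exact ⟨_, rfl⟩
  · exact absurd (proxFpois_nonneg (mul_nonneg hβ.le hy)) hp

lemma fpois_subgradient (hy : 0 ≤ y) (hβ : 0 < β) (t : ℝ) :
    (β : EReal) * fpois y (proxFpois y β x) + ((x - proxFpois y β x) * (t - proxFpois y β x) : ℝ)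
      ≤ β * fpois y t := by
  set p := proxFpois y β x
  have hβy : 0 ≤ β * y := mul_nonneg hβ.le hy
  have hmul : p * (p + β - x) = β * y := proxFpois_mul_eq hβy
  have hslope : 0 ≤ p + β - x := by linarith [sub_le_proxFpois (x := x) hβy]
  have hβtop : (β : EReal) * ⊤ = ⊤ := EReal.mul_top_of_pos (by exact_mod_cast hβ)
  rcases hy.lt_or_eq with hy0 | rfl
  · have hp : 0 < p := proxFpois_pos (mul_pos hβ hy0)
    simp only [fpois, if_pos hy0, if_pos hp]
    split_ifs with ht
    · norm_cast
      have key : β * (-y * Real.log t + t) - (β * (-y * Real.log p + p) + (x - p) * (t - p))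
          = (p + β - x) * (t - p - p * (Real.log t - Real.log p)) := by
        linear_combination (Real.log t - Real.log p) * hmul
      nlinarith [key, mul_nonneg hslope (sub_nonneg.2 (Real.mul_log_sub_log_le_sub hp ht))]
    · simp [hβtop]
  · have hp : 0 ≤ p := proxFpois_nonneg hβy
    simp only [fpois, lt_irrefl, if_false, if_pos hp]
    split_ifs with ht
    · norm_cast
      nlinarith [hmul, mul_nonneg hslope ht]
    · simp [hβtop]

lemma fpois_quadratic_growth (hy : 0 ≤ y) (hβ : 0 < β) (t : ℝ) :
    (β : EReal) * fpois y (proxFpois y β x) + ((x - proxFpois y β x) ^ 2 / 2 : ℝ)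
        + ((t - proxFpois y β x) ^ 2 / 2 : ℝ)
      ≤ β * fpois y t + ((x - t) ^ 2 / 2 : ℝ) := by
  set p := proxFpois y β x
  calc (β : EReal) * fpois y p + ((x - p) ^ 2 / 2 : ℝ) + ((t - p) ^ 2 / 2 : ℝ)
      = β * fpois y p + ((x - p) * (t - p) : ℝ) + ((x - t) ^ 2 / 2 : ℝ) := by
        rw [add_assoc, add_assoc, ← EReal.coe_add, ← EReal.coe_add]
        congr 2
        ring
    _ ≤ β * fpois y t + ((x - t) ^ 2 / 2 : ℝ) := by
        gcongr
        exact fpois_subgradient hy hβ t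

end fpois

lemma EReal.coe_finset_sum {ι : Type*} (s : Finset ι) (f : ι → ℝ) :
    ((∑ i ∈ s, f i : ℝ) : EReal) = ∑ i ∈ s, (f i : EReal) :=
  map_sum (⟨⟨Real.toEReal, EReal.coe_zero⟩, EReal.coe_add⟩ : ℝ →+ EReal) f s

lemma EReal.mul_finset_sum_of_nonneg_of_ne_top {ι : Type*} {a : EReal} (ha : 0 ≤ a)
    (ha' : a ≠ ⊤) (s : Finset ι) (f : ι → EReal) :
    a * ∑ i ∈ s, f i = ∑ i ∈ s, a * f i :=
  map_sum (⟨⟨(a * ·), mul_zero a⟩, EReal.left_distrib_of_nonneg_of_ne_top ha ha'⟩ :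
    EReal →+ EReal) f s

section f1

variable {n : ℕ} {y : Fin n → ℝ} {β : ℝ}

lemma mul_f1_add_half_norm_sq_eq_sum (hβ : 0 ≤ β) (x η : EuclideanSpace ℝ (Fin n)) :
    (β : EReal) * f1 y η + ((‖x - η‖ ^ 2 / 2 : ℝ) : EReal)
      = ∑ i, ((β : EReal) * fpois (y i) (η i) + ((x i - η i) ^ 2 / 2 : ℝ)) := by
  rw [f1, EReal.mul_finset_sum_of_nonneg_of_ne_top (by exact_mod_cast hβ) (EReal.coe_ne_top β),
    EuclideanSpace.real_norm_sq_eq, Finset.sum_div, EReal.coe_finset_sum, Finset.sum_add_distrib]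
  rfl

lemma exists_mul_f1_add_half_norm_sq_eq_coe (hy : ∀ i, 0 ≤ y i) (hβ : 0 < β)
    (x ηstar : EuclideanSpace ℝ (Fin n)) (hstar : ∀ i, ηstar i = proxFpois (y i) β (x i)) :
    ∃ r : ℝ, (β : EReal) * f1 y ηstar + ((‖x - ηstar‖ ^ 2 / 2 : ℝ) : EReal) = r := by
  choose r hr using fun i => exists_fpois_proxFpois_eq_coe (x := x i) (hy i) hβ
  refine ⟨∑ i, (β * r i + (x i - ηstar i) ^ 2 / 2), ?_⟩
  rw [mul_f1_add_half_norm_sq_eq_sum hβ.le, EReal.coe_finset_sum]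
  refine Finset.sum_congr rfl fun i _ => ?_
  rw [hstar i, hr i]
  norm_cast

lemma mul_f1_quadratic_growth (hy : ∀ i, 0 ≤ y i) (hβ : 0 < β)
    (x ηstar : EuclideanSpace ℝ (Fin n)) (hstar : ∀ i, ηstar i = proxFpois (y i) β (x i))
    (η : EuclideanSpace ℝ (Fin n)) :
    (β : EReal) * f1 y ηstar + ((‖x - ηstar‖ ^ 2 / 2 : ℝ) : EReal)
        + ((‖η - ηstar‖ ^ 2 / 2 : ℝ) : EReal)
      ≤ (β : EReal) * f1 y η + ((‖x - η‖ ^ 2 / 2 : ℝ) : EReal) := by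
  rw [mul_f1_add_half_norm_sq_eq_sum hβ.le, mul_f1_add_half_norm_sq_eq_sum hβ.le,
    EuclideanSpace.real_norm_sq_eq, Finset.sum_div, EReal.coe_finset_sum,
    ← Finset.sum_add_distrib]
  refine Finset.sum_le_sum fun i _ => ?_
  simp only [PiLp.sub_apply, hstar i]
  exact fpois_quadratic_growth (hy i) hβ (η i)

end f1

lemma unique_minimizer_of_quadratic_growth {E : Type*} [NormedAddCommGroup E] {F : E → EReal}
    {a : E} (hfin : ∃ r : ℝ, F a = r) (h : ∀ η, F a + ((‖η - a‖ ^ 2 / 2 : ℝ) : EReal) ≤ F η) :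
    (∀ η, F a ≤ F η) ∧ ∀ η, (∀ ξ, F η ≤ F ξ) → η = a := by
  refine ⟨fun η => le_trans (le_add_of_nonneg_right (by positivity)) (h η), fun η hη => ?_⟩
  obtain ⟨r, hr⟩ := hfin
  have hle := (h η).trans (hη a)
  rw [hr, ← EReal.coe_add, EReal.coe_le_coe_iff] at hle
  have : ‖η - a‖ = 0 := by nlinarith [norm_nonneg (η - a)]
  exact sub_eq_zero.1 (norm_eq_zero.1 this)

/-- Proximity operator of `β·f₁`: the unique minimizer of `η ↦ β·f₁(η) + ‖x - η‖²/2`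
is given coordinatewise by `η*[i] = (x[i] - β + √((x[i]-β)² + 4β·y[i]))/2`. -/
theorem prox_f1 (n : ℕ) (y : Fin n → ℝ) (hy : ∀ i, 0 ≤ y i) (β : ℝ) (hβ : 0 < β)
    (x : EuclideanSpace ℝ (Fin n)) :
    ∀ ηstar : EuclideanSpace ℝ (Fin n),
      (∀ i, ηstar i = (x i - β + Real.sqrt ((x i - β) ^ 2 + 4 * β * y i)) / 2) →
      (∀ η : EuclideanSpace ℝ (Fin n),
        (β : EReal) * f1 y ηstar + ((‖x - ηstar‖ ^ 2 / 2 : ℝ) : EReal)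
          ≤ (β : EReal) * f1 y η + ((‖x - η‖ ^ 2 / 2 : ℝ) : EReal)) ∧
      (∀ η : EuclideanSpace ℝ (Fin n),
        (∀ ξ : EuclideanSpace ℝ (Fin n),
          (β : EReal) * f1 y η + ((‖x - η‖ ^ 2 / 2 : ℝ) : EReal)
            ≤ (β : EReal) * f1 y ξ + ((‖x - ξ‖ ^ 2 / 2 : ℝ) : EReal)) →
        η = ηstar) := by
  intro ηstar hstar
  exact unique_minimizer_of_quadratic_growth
    (F := fun η => (β : EReal) * f1 y η + ((‖x - η‖ ^ 2 / 2 : ℝ) : EReal))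
    (exists_mul_f1_add_half_norm_sq_eq_coe hy hβ x ηstar hstar)
    (mul_f1_quadratic_growth hy hβ x ηstar hstar)
end

section
/- Let ψ : ℝ → ℝ be convex, even (ψ(-t) = ψ(t)), nonnegative, nondecreasing on [0,+∞), with ψ(0) = 0, continuous on ℝ, twice differentiable on ℝ \ {0}, and with positive right derivative at zero ψ'₊(0) = lim_{h→0⁺} ψ(h)/h > 0. Let δ > 0 and β ∈ ℝ. Then the unique minimizer α̂ of t ↦ δψ(t) + (t - β)²/2 equals 0 if (and only if) |β| ≤ δ·ψ'₊(0). -/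
/-!
The objective `δψ(t) + (t - β)²/2` is continuous, coercive and strictly convex, so it has a unique
minimizer, and that minimizer is `0` exactly when `0` is a minimizer. Convexity makes the slopes
`ψ(t)/t` increase on `(0, ∞)`, so `ψ(t) ≥ d·|t|`; hence the objective exceeds its value at `0` by at
least `(δd - |β|)|t| + t²/2`, which is nonnegative if `|β| ≤ δd`. If `|β| > δd`, a small step `t`
in the direction of `β` lowers the objective, since `δψ(t) + t²/2 = (δd + o(1))|t|`.
-/

open Set Filter Topology

noncomputable def proxObjective (ψ : ℝ → ℝ) (δ β t : ℝ) : ℝ := δ * ψ t + (t - β) ^ 2 / 2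

theorem ConvexOn.mul_le_of_tendsto_div_nhdsGT {ψ : ℝ → ℝ} (hconv : ConvexOn ℝ univ ψ)
    (hzero : ψ 0 = 0) {d : ℝ} (hright : Tendsto (fun h => ψ h / h) (𝓝[>] 0) (𝓝 d))
    {t : ℝ} (ht : 0 < t) : d * t ≤ ψ t := by
  have hslope : ∀ᶠ h in 𝓝[>] 0, ψ h / h ≤ ψ t / t := by
    filter_upwards [Ioo_mem_nhdsGT ht] with h ⟨hh, hht⟩
    simpa [hzero] using
      hconv.secant_mono (mem_univ 0) (mem_univ h) (mem_univ t) hh.ne' ht.ne' hht.le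
  simpa [le_div_iff₀ ht, mul_comm] using le_of_tendsto hright hslope

theorem ConvexOn.mul_abs_le_of_tendsto_div_nhdsGT {ψ : ℝ → ℝ} (hconv : ConvexOn ℝ univ ψ)
    (heven : ∀ t, ψ (-t) = ψ t) (hzero : ψ 0 = 0) {d : ℝ}
    (hright : Tendsto (fun h => ψ h / h) (𝓝[>] 0) (𝓝 d)) (t : ℝ) : d * |t| ≤ ψ t := by
  rcases lt_trichotomy t 0 with ht | rfl | ht
  · simpa [abs_of_neg ht, heven] using
      hconv.mul_le_of_tendsto_div_nhdsGT hzero hright (neg_pos.2 ht)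
  · simp [hzero]
  · simpa [abs_of_pos ht] using hconv.mul_le_of_tendsto_div_nhdsGT hzero hright ht

theorem strictConvexOn_sub_sq_div_two (β : ℝ) :
    StrictConvexOn ℝ univ fun t : ℝ => (t - β) ^ 2 / 2 := by
  refine ⟨convex_univ, fun x _ y _ hxy a b ha hb hab => ?_⟩
  have hgap : 0 < a * b * (x - y) ^ 2 := by
    have := sub_ne_zero.2 hxy
    positivity
  obtain rfl : b = 1 - a := by linarith
  simp only [smul_eq_mul]
  nlinarith

section

variable {ψ : ℝ → ℝ} {δ : ℝ}

theorem ConvexOn.strictConvexOn_proxObjective (hconv : ConvexOn ℝ univ ψ) (hδ : 0 ≤ δ) (β : ℝ) :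
    StrictConvexOn ℝ univ (proxObjective ψ δ β) :=
  (hconv.smul hδ).add_strictConvexOn (strictConvexOn_sub_sq_div_two β)

theorem Continuous.exists_forall_proxObjective_le (hcont : Continuous ψ)
    (hnonneg : ∀ t, 0 ≤ ψ t) (hδ : 0 ≤ δ) (β : ℝ) :
    ∃ a, ∀ t, proxObjective ψ δ β a ≤ proxObjective ψ δ β t := by
  have hquad : Tendsto (fun t : ℝ => (t - β) ^ 2 / 2) (cocompact ℝ) atTop := by
    simpa [Real.dist_eq, sq_abs] using ((tendsto_pow_atTop two_ne_zero).comp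
      (tendsto_dist_right_cocompact_atTop β)).atTop_div_const two_pos
  refine Continuous.exists_forall_le (by unfold proxObjective; fun_prop) ?_
  exact tendsto_atTop_mono (fun t => le_add_of_nonneg_left (mul_nonneg hδ (hnonneg t))) hquad

variable {d : ℝ}

theorem proxObjective_zero_le_of_abs_le (hconv : ConvexOn ℝ univ ψ)
    (heven : ∀ t, ψ (-t) = ψ t) (hzero : ψ 0 = 0)
    (hright : Tendsto (fun h => ψ h / h) (𝓝[>] 0) (𝓝 d)) (hδ : 0 ≤ δ) {β : ℝ}
    (hβ : |β| ≤ δ * d) (t : ℝ) : proxObjective ψ δ β 0 ≤ proxObjective ψ δ β t := by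
  have hψ := hconv.mul_abs_le_of_tendsto_div_nhdsGT heven hzero hright t
  have hlin : t * β ≤ δ * ψ t :=
    calc t * β ≤ |t| * |β| := by rw [← abs_mul]; exact le_abs_self _
      _ ≤ |t| * (δ * d) := by gcongr
      _ ≤ δ * ψ t := by nlinarith [mul_le_mul_of_nonneg_left hψ hδ]
  unfold proxObjective
  nlinarith [sq_nonneg t]

theorem exists_proxObjective_lt_zero (heven : ∀ t, ψ (-t) = ψ t) (hzero : ψ 0 = 0)
    (hright : Tendsto (fun h => ψ h / h) (𝓝[>] 0) (𝓝 d)) {β : ℝ} (hβ : δ * d < |β|) :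
    ∃ s, proxObjective ψ δ β s < proxObjective ψ δ β 0 := by
  have hlim : Tendsto (fun h => δ * (ψ h / h) + h / 2) (𝓝[>] 0) (𝓝 (δ * d)) := by
    simpa using (hright.const_mul δ).add
      ((continuous_id.div_const 2).tendsto 0 |>.mono_left nhdsWithin_le_nhds)
  obtain ⟨h, hsmall, hh⟩ :=
    ((hlim.eventually (eventually_lt_nhds hβ)).and self_mem_nhdsWithin).exists
  have hgain : δ * ψ h + h ^ 2 / 2 < h * |β| := by
    have := mul_lt_mul_of_pos_left hsmall hh
    field_simp at this ⊢
    linarith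
  refine ⟨if 0 ≤ β then h else -h, ?_⟩
  unfold proxObjective
  split_ifs with hβ0
  · rw [abs_of_nonneg hβ0] at hgain
    rw [hzero]; nlinarith
  · rw [abs_of_neg (not_le.1 hβ0)] at hgain
    rw [hzero, heven]; nlinarith

theorem forall_proxObjective_zero_le_iff (hconv : ConvexOn ℝ univ ψ)
    (heven : ∀ t, ψ (-t) = ψ t) (hzero : ψ 0 = 0)
    (hright : Tendsto (fun h => ψ h / h) (𝓝[>] 0) (𝓝 d)) (hδ : 0 ≤ δ) (β : ℝ) :
    (∀ t, proxObjective ψ δ β 0 ≤ proxObjective ψ δ β t) ↔ |β| ≤ δ * d := by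
  refine ⟨fun hmin => ?_, proxObjective_zero_le_of_abs_le hconv heven hzero hright hδ⟩
  by_contra! hβ
  obtain ⟨s, hs⟩ := exists_proxObjective_lt_zero heven hzero hright hβ
  exact (hmin s).not_gt hs

end

theorem prox_threshold_zero_general (ψ : ℝ → ℝ)
    (hconv : ConvexOn ℝ Set.univ ψ)
    (heven : ∀ t, ψ (-t) = ψ t)
    (hnonneg : ∀ t, 0 ≤ ψ t)
    (hzero : ψ 0 = 0)
    (hcont : Continuous ψ)
    (d : ℝ)
    (hright : Filter.Tendsto (fun h : ℝ => ψ h / h) (nhdsWithin 0 (Set.Ioi 0)) (nhds d))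
    (δ : ℝ) (hδ : 0 < δ) (β : ℝ) :
    ∃ a : ℝ, (∀ t : ℝ, δ * ψ a + (a - β) ^ 2 / 2 ≤ δ * ψ t + (t - β) ^ 2 / 2) ∧
      (∀ b : ℝ, (∀ t : ℝ, δ * ψ b + (b - β) ^ 2 / 2 ≤ δ * ψ t + (t - β) ^ 2 / 2) → b = a) ∧
      (a = 0 ↔ |β| ≤ δ * d) := by
  obtain ⟨a, ha⟩ := hcont.exists_forall_proxObjective_le hnonneg hδ.le β
  have hunique : ∀ b, (∀ t, proxObjective ψ δ β b ≤ proxObjective ψ δ β t) → b = a :=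
    fun b hb => (hconv.strictConvexOn_proxObjective hδ.le β).eq_of_isMinOn
      (fun t _ => hb t) (fun t _ => ha t) (mem_univ b) (mem_univ a)
  refine ⟨a, ha, hunique, ?_⟩
  rw [← forall_proxObjective_zero_le_iff hconv heven hzero hright hδ.le β]
  exact ⟨fun h => h ▸ ha, fun h => (hunique 0 h).symm⟩

/-- Threshold behaviour of the proximity operator (Fadili–Starck): under the stated
assumptions on `ψ` and with right derivative `d = ψ'₊(0) > 0` at zero, the unique
minimizer `α̂` of `t ↦ δψ(t) + (t - β)²/2` equals `0` if and only if `|β| ≤ δ·d`. -/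
theorem prox_threshold_zero (ψ : ℝ → ℝ)
    (hconv : ConvexOn ℝ Set.univ ψ)
    (heven : ∀ t, ψ (-t) = ψ t)
    (hnonneg : ∀ t, 0 ≤ ψ t)
    (hmono : MonotoneOn ψ (Set.Ici (0 : ℝ)))
    (hzero : ψ 0 = 0)
    (hcont : Continuous ψ)
    (hdiff : ∀ t : ℝ, t ≠ 0 → DifferentiableAt ℝ ψ t ∧ DifferentiableAt ℝ (deriv ψ) t)
    (d : ℝ) (hd : 0 < d)
    (hright : Filter.Tendsto (fun h : ℝ => ψ h / h) (nhdsWithin 0 (Set.Ioi 0)) (nhds d))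
    (δ : ℝ) (hδ : 0 < δ) (β : ℝ) :
    ∃ a : ℝ, (∀ t : ℝ, δ * ψ a + (a - β) ^ 2 / 2 ≤ δ * ψ t + (t - β) ^ 2 / 2) ∧
      (∀ b : ℝ, (∀ t : ℝ, δ * ψ b + (b - β) ^ 2 / 2 ≤ δ * ψ t + (t - β) ^ 2 / 2) → b = a) ∧
      (a = 0 ↔ |β| ≤ δ * d) :=
  prox_threshold_zero_general ψ hconv heven hnonneg hzero hcont d hright δ hδ β
end
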